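/- arXiv:1506.02099 — 7 statements merged into one kernel-verified Lean document; each statement's English description precedes it below -/
import Mathlib

section
/- Let f: ℝ → ℝ be defined by f(y) = exp(-1/y²) for y ≠ 0 and f(0) = 0. Let G(x,y) = (x - f(y))² and Y(x) = argmin{G(x,y) : y² ≤ 1}. Then for x ∈ (0, e⁻¹], Y(x) = {√(1/(-ln x)), -√(1/(-ln x))}, and for x ∈ [-1, 0], Y(x) = {0}. -/
open Set

/-- The `C^∞` function `f(y) = exp(-1/y²)` for `y ≠ 0`, `f(0) = 0`. -/
noncomputable def fEx (y : ℝ) : ℝ := if y = 0 then 0 else Real.exp (-(1 / y ^ 2))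

/-- `G(x,y) = (x - f(y))²`. -/
noncomputable def GEx (x y : ℝ) : ℝ := (x - fEx y) ^ 2

/-- `Y(x) = argmin { G(x,y) : y² ≤ 1 }`. -/
noncomputable def YEx (x : ℝ) : Set ℝ :=
  {y : ℝ | y ^ 2 ≤ 1 ∧ ∀ z : ℝ, z ^ 2 ≤ 1 → GEx x y ≤ GEx x z}

/-!
Since `f ≥ 0` vanishes only at `0`, for `x ≤ 0` the loss `(x - f y)²` is least, with value `x²`,
exactly where `f y = 0`, i.e. at `y = 0`. For `0 < x ≤ e⁻¹` the value `x` is attained by `f` inside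
the constraint set, so the minimum is `0` and the minimizers are the solutions of `f y = x`,
which are `y = ±√(1 / -log x)`; the bound `x ≤ e⁻¹` is what puts them in `[-1, 1]`.
-/

theorem setOf_forall_le_eq_of_isLeast_image {α β : Type*} [PartialOrder β] {G : α → β}
    {S : Set α} {m : β} (hm : IsLeast (G '' S) m) :
    {y | y ∈ S ∧ ∀ z ∈ S, G y ≤ G z} = {y | y ∈ S ∧ G y = m} := by
  obtain ⟨⟨z, hz, rfl⟩, hlow⟩ := hm
  ext y
  refine and_congr_right fun hy ↦ ⟨fun hmin ↦ ?_, fun heq z hz' ↦ ?_⟩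
  · exact le_antisymm (hmin z hz) (hlow ⟨y, hy, rfl⟩)
  · exact heq ▸ hlow ⟨z, hz', rfl⟩

theorem sq_le_sub_sq_of_nonpos {x a : ℝ} (hx : x ≤ 0) (ha : 0 ≤ a) : x ^ 2 ≤ (x - a) ^ 2 := by
  nlinarith

theorem sub_sq_eq_sq_iff_of_nonpos {x a : ℝ} (hx : x ≤ 0) (ha : 0 ≤ a) :
    (x - a) ^ 2 = x ^ 2 ↔ a = 0 := by
  constructor
  · intro h
    nlinarith
  · rintro rfl
    ring

theorem sq_eq_iff_eq_sqrt_or_eq_neg_sqrt {y c : ℝ} (hc : 0 ≤ c) :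
    y ^ 2 = c ↔ y = √c ∨ y = -√c := by
  rw [← sq_eq_sq_iff_eq_or_eq_neg, Real.sq_sqrt hc]

theorem fEx_nonneg (y : ℝ) : 0 ≤ fEx y := by
  unfold fEx
  split_ifs
  exacts [le_rfl, (Real.exp_pos _).le]

theorem fEx_eq_zero_iff {y : ℝ} : fEx y = 0 ↔ y = 0 := by
  unfold fEx
  split_ifs with hy <;> simpa using hy

theorem fEx_eq_iff_sq_eq {x y : ℝ} (hx0 : 0 < x) (hx1 : x < 1) :
    fEx y = x ↔ y ^ 2 = 1 / -Real.log x := by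
  have hlog : 0 < -Real.log x := neg_pos.2 (Real.log_neg hx0 hx1)
  by_cases hy : y = 0
  · subst hy
    refine iff_of_false (by simpa [fEx] using hx0.ne) ?_
    rw [zero_pow two_ne_zero]
    exact (one_div_pos.2 hlog).ne
  · rw [fEx, if_neg hy, ← Real.exp_log hx0, Real.exp_eq_exp, Real.exp_log hx0, neg_eq_iff_eq_neg,
      one_div, one_div, inv_eq_iff_eq_inv]

theorem stmt0 :
    (∀ x ∈ Ioc (0 : ℝ) (Real.exp (-1)),
      YEx x = {Real.sqrt (1 / (-Real.log x)), -Real.sqrt (1 / (-Real.log x))}) ∧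
    (∀ x ∈ Icc (-1 : ℝ) 0, YEx x = {0}) := by
  constructor
  · rintro x ⟨hx0, hx1⟩
    have hlog : 1 ≤ -Real.log x := by
      have := Real.log_le_log hx0 hx1
      rw [Real.log_exp] at this
      linarith
    set c := 1 / -Real.log x
    have hc0 : 0 ≤ c := div_nonneg zero_le_one (by linarith)
    have hc1 : c ≤ 1 := div_le_one_of_le₀ hlog (by linarith)
    have hzero (y : ℝ) : GEx x y = 0 ↔ y = √c ∨ y = -√c := by
      rw [GEx, sq_eq_zero_iff, sub_eq_zero, eq_comm,
        fEx_eq_iff_sq_eq hx0 (hx1.trans_lt (Real.exp_lt_one_iff.2 (by norm_num))),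
        sq_eq_iff_eq_sqrt_or_eq_neg_sqrt hc0]
    have hleast : IsLeast (GEx x '' {y | y ^ 2 ≤ 1}) 0 :=
      ⟨⟨√c, (Real.sq_sqrt hc0).trans_le hc1, (hzero _).2 (Or.inl rfl)⟩,
        by rintro _ ⟨y, -, rfl⟩; exact sq_nonneg _⟩
    refine (setOf_forall_le_eq_of_isLeast_image hleast).trans (ext fun y ↦ ?_)
    simp only [mem_ofPred_eq, mem_insert_iff, mem_singleton_iff, hzero]
    refine and_iff_right_of_imp ?_
    rintro (rfl | rfl) <;> simpa only [neg_sq, Real.sq_sqrt hc0] using hc1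
  · rintro x ⟨-, hx0⟩
    have hleast : IsLeast (GEx x '' {y | y ^ 2 ≤ 1}) (x ^ 2) :=
      ⟨⟨0, by norm_num, by simp [GEx, fEx]⟩,
        by rintro _ ⟨y, -, rfl⟩; exact sq_le_sub_sq_of_nonpos hx0 (fEx_nonneg y)⟩
    refine (setOf_forall_le_eq_of_isLeast_image hleast).trans (ext fun y ↦ ?_)
    simp only [mem_ofPred_eq, mem_singleton_iff, GEx,
      sub_sq_eq_sq_iff_of_nonpos hx0 (fEx_nonneg y), fEx_eq_zero_iff]
    exact and_iff_right_of_imp (by rintro rfl; norm_num)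
end

section
/- Let f: ℝ → ℝ, f(y) = exp(-1/y²) for y ≠ 0, f(0) = 0, G(x,y) = (x - f(y))², and Y(x) = argmin{G(x,y) : y² ≤ 1}. Then for every τ ∈ (0,1] and every constant c > 0, the Hölder continuity estimate dist(y, Y(0)) ≤ c·|x|^τ for all y ∈ Y(x) fails for x near 0; concretely, taking x_k = e^{-k} and y_k = √(1/k) ∈ Y(x_k), the ratio |x_k|^τ / dist(y_k, Y(0)) = √k · e^{-τk} tends to 0 as k → ∞. -/
open Set Filter

lemma YEx_zero : YEx 0 = {0} := by
  ext y
  simp only [YEx, GEx, mem_setOf_eq, mem_singleton_iff]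
  constructor
  · rintro ⟨hy, hmin⟩
    have h0 := hmin 0 (by norm_num)
    have hfy0 : fEx 0 = 0 := by simp [fEx]
    rw [hfy0] at h0
    have hyy : fEx y = 0 := by nlinarith [sq_nonneg (fEx y)]
    by_contra hne
    simp only [fEx, if_neg hne] at hyy
    exact (Real.exp_pos _).ne' hyy
  · rintro rfl
    refine ⟨by norm_num, fun z hz => ?_⟩
    have hfy0 : fEx 0 = 0 := by simp [fEx]
    rw [hfy0]
    simpa using sq_nonneg (0 - fEx z)

lemma yk_sq {k : ℕ} (hk : 0 < k) : (Real.sqrt (1 / k)) ^ 2 = 1 / k := by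
  rw [Real.sq_sqrt]; positivity

lemma yk_pos {k : ℕ} (hk : 0 < k) : 0 < Real.sqrt (1 / k) := by
  apply Real.sqrt_pos.2; positivity

lemma yk_mem {k : ℕ} (hk : 0 < k) :
    Real.sqrt (1 / k) ∈ YEx (Real.exp (-(k : ℝ))) := by
  have hsq := yk_sq hk
  have hne : Real.sqrt (1 / k) ≠ 0 := (yk_pos hk).ne'
  have hf : fEx (Real.sqrt (1 / k)) = Real.exp (-(k : ℝ)) := by
    simp only [fEx, if_neg hne, hsq]
    congr 1
    rw [one_div, one_div, inv_inv]
  constructor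
  · rw [hsq, div_le_one (by exact_mod_cast hk)]
    exact_mod_cast Nat.one_le_iff_ne_zero.2 hk.ne'
  · intro z hz
    simp only [GEx, hf, sub_self]
    simpa using sq_nonneg (Real.exp (-(k : ℝ)) - fEx z)

lemma ratio_eq (τ : ℝ) {k : ℕ} (hk : 0 < k) :
    |Real.exp (-(k : ℝ))| ^ τ / Metric.infDist (Real.sqrt (1 / k)) (YEx 0)
      = Real.sqrt k * Real.exp (-(τ * k)) := by
  have h0 : Real.sqrt (k : ℝ) ≠ 0 := by
    have : (0:ℝ) < k := by exact_mod_cast hk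
    positivity
  rw [YEx_zero, Metric.infDist_singleton, Real.dist_eq, sub_zero,
    abs_of_nonneg (Real.sqrt_nonneg _), abs_of_nonneg (Real.exp_pos _).le,
    ← Real.exp_mul, one_div, Real.sqrt_inv, div_eq_mul_inv, inv_inv, mul_comm]
  congr 2
  ring

lemma tendsto_aux {τ : ℝ} (hτ : 0 < τ) :
    Tendsto (fun k : ℕ => Real.sqrt k * Real.exp (-(τ * k))) atTop (nhds 0) := by
  have h := tendsto_rpow_mul_exp_neg_mul_atTop_nhds_zero (1/2) τ hτ
  have h2 : Tendsto (fun k : ℕ => (k : ℝ)) atTop atTop := tendsto_natCast_atTop_atTop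
  refine (h.comp h2).congr fun k => ?_
  simp only [Function.comp]
  rw [Real.sqrt_eq_rpow, neg_mul]

theorem stmt1 :
    YEx 0 = {0} ∧
    (∀ k : ℕ, 0 < k → Real.sqrt (1 / k) ∈ YEx (Real.exp (-(k : ℝ)))) ∧
    (∀ τ ∈ Ioc (0 : ℝ) 1,
      -- the ratio |x_k|^τ / dist(y_k, Y(0)) equals √k · e^{-τk} and tends to 0
      (∀ k : ℕ, 0 < k →
        |Real.exp (-(k : ℝ))| ^ τ / Metric.infDist (Real.sqrt (1 / k)) (YEx 0)
          = Real.sqrt k * Real.exp (-(τ * k))) ∧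
      Tendsto (fun k : ℕ => Real.sqrt k * Real.exp (-(τ * k))) atTop (nhds 0)) ∧
    -- hence the Hölder estimate fails for every τ ∈ (0,1] and c > 0
    (∀ τ ∈ Ioc (0 : ℝ) 1, ∀ c > (0 : ℝ),
      ¬ ∃ δ > (0 : ℝ), ∀ x : ℝ, |x| ≤ δ →
          ∀ y ∈ YEx x, Metric.infDist y (YEx 0) ≤ c * |x| ^ τ) := by
  refine ⟨YEx_zero, fun k hk => yk_mem hk, fun τ hτ => ⟨fun k hk => ratio_eq τ hk,
    tendsto_aux hτ.1⟩, ?_⟩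
  rintro τ hτ c hc ⟨δ, hδ, hH⟩
  -- eventually c * (√k * exp(-τk)) < 1 and exp(-k) ≤ δ
  have h1 : Tendsto (fun k : ℕ => c * (Real.sqrt k * Real.exp (-(τ * k)))) atTop (nhds 0) := by
    simpa using (tendsto_aux hτ.1).const_mul c
  have h2 : ∀ᶠ k : ℕ in atTop, c * (Real.sqrt k * Real.exp (-(τ * k))) < 1 :=
    h1.eventually (eventually_lt_nhds zero_lt_one)
  have h3 : Tendsto (fun k : ℕ => Real.exp (-(k : ℝ))) atTop (nhds 0) := by
    exact Real.tendsto_exp_atBot.comp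
      (tendsto_neg_atBot_iff.2 (tendsto_natCast_atTop_atTop (R := ℝ)))
  have h4 : ∀ᶠ k : ℕ in atTop, Real.exp (-(k : ℝ)) ≤ δ :=
    h3.eventually (eventually_le_nhds hδ)
  obtain ⟨k, ⟨hk1, hk2⟩, hk3⟩ := ((h2.and h4).and (eventually_gt_atTop 0)).exists
  -- apply the Hölder bound at x = exp(-k), y = √(1/k)
  have habs : |Real.exp (-(k : ℝ))| = Real.exp (-(k : ℝ)) := abs_of_nonneg (Real.exp_pos _).le
  have hbound := hH (Real.exp (-(k : ℝ))) (by rwa [habs]) _ (yk_mem hk3)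
  rw [YEx_zero, Metric.infDist_singleton, Real.dist_eq, sub_zero,
    abs_of_nonneg (Real.sqrt_nonneg _), habs, ← Real.exp_mul] at hbound
  -- hbound : √(1/k) ≤ c * exp(-k * τ)
  have hkpos : (0:ℝ) < k := by exact_mod_cast hk3
  have hsk : (0:ℝ) < Real.sqrt k := Real.sqrt_pos.2 hkpos
  have hmul : Real.sqrt (1 / k) * Real.sqrt k = 1 := by
    rw [one_div, Real.sqrt_inv, inv_mul_cancel₀ hsk.ne']
  have : (1:ℝ) ≤ c * Real.exp (-(k:ℝ) * τ) * Real.sqrt k := by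
    calc (1:ℝ) = Real.sqrt (1 / k) * Real.sqrt k := hmul.symm
    _ ≤ c * Real.exp (-(k:ℝ) * τ) * Real.sqrt k := by
        apply mul_le_mul_of_nonneg_right hbound hsk.le
  have heq : c * Real.exp (-(k:ℝ) * τ) * Real.sqrt k
      = c * (Real.sqrt k * Real.exp (-(τ * k))) := by ring_nf
  rw [heq] at this
  linarith
end

section
/- Let G: ℝⁿ × ℝᵐ → ℝ be a polynomial (or more generally continuous and locally Lipschitz in x uniformly on compacts), let F ⊆ ℝᵐ be nonempty and compact, and define Φ(x) = min_{y ∈ F} G(x,y). Suppose there exist constants c₀ > 0 and τ ∈ (0,1] such that dist(y, Y(x̄)) ≤ c₀·|Φ(x̄) - G(x̄,y)|^τ for all y ∈ F, where Y(x) = argmin_{y ∈ F} G(x,y), and suppose there exist δ, L > 0 such that |G(x,y) - G(x̄,y)| ≤ L‖x - x̄‖ for all y ∈ F and all x with ‖x - x̄‖ ≤ δ. Then with c = (2 c₀^{1/τ} L)^τ, one has Y(x) ⊆ Y(x̄) + c‖x - x̄‖^τ · B̄(0,1) for all x with ‖x - x̄‖ ≤ δ. -/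
open Set Pointwise

theorem stmt3 {n m : ℕ}
    (G : EuclideanSpace ℝ (Fin n) → EuclideanSpace ℝ (Fin m) → ℝ)
    (hGcont : Continuous fun p : EuclideanSpace ℝ (Fin n) × EuclideanSpace ℝ (Fin m) =>
      G p.1 p.2)
    (F : Set (EuclideanSpace ℝ (Fin m))) (hF : IsCompact F) (hFne : F.Nonempty)
    (Φ : EuclideanSpace ℝ (Fin n) → ℝ)
    (hΦ : ∀ x, IsLeast ((fun y => G x y) '' F) (Φ x))
    (Y : EuclideanSpace ℝ (Fin n) → Set (EuclideanSpace ℝ (Fin m)))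
    (hY : ∀ x, Y x = {y ∈ F | ∀ z ∈ F, G x y ≤ G x z})
    (xb : EuclideanSpace ℝ (Fin n)) (c₀ τ : ℝ) (hc₀ : 0 < c₀) (hτ : τ ∈ Ioc (0 : ℝ) 1)
    (hLoj : ∀ y ∈ F, Metric.infDist y (Y xb) ≤ c₀ * |Φ xb - G xb y| ^ τ)
    (δ L : ℝ) (hδ : 0 < δ) (hL : 0 < L)
    (hLip : ∀ y ∈ F, ∀ x : EuclideanSpace ℝ (Fin n), ‖x - xb‖ ≤ δ →
      |G x y - G xb y| ≤ L * ‖x - xb‖) :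
    ∀ x : EuclideanSpace ℝ (Fin n), ‖x - xb‖ ≤ δ →
      Y x ⊆ Y xb + Metric.closedBall (0 : EuclideanSpace ℝ (Fin m)) ((2 * c₀ ^ ((1 : ℝ) / τ) * L) ^ τ * ‖x - xb‖ ^ τ) := by
  intro x hx y hy
  have hτ0 : (0:ℝ) < τ := hτ.1
  rw [hY] at hy
  obtain ⟨hyF, hymin⟩ := hy
  obtain ⟨⟨y0, hy0F, hy0⟩, hlb⟩ := hΦ xb
  -- y0 is a minimizer of G xb on F
  have hy0mem : y0 ∈ Y xb := by
    rw [hY]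
    have hy0' : G xb y0 = Φ xb := hy0
    exact ⟨hy0F, fun z hz => hy0'.le.trans (hlb ⟨z, hz, rfl⟩)⟩
  -- Y xb is compact and nonempty
  have hYsub : Y xb ⊆ F := by rw [hY]; exact fun z hz => hz.1
  have hGxbcont : Continuous fun y => G xb y :=
    hGcont.comp (continuous_const.prodMk continuous_id)
  have hYclosed : IsClosed (Y xb) := by
    rw [hY]
    have : {y ∈ F | ∀ z ∈ F, G xb y ≤ G xb z} = F ∩ ⋂ z ∈ F, {y | G xb y ≤ G xb z} := by
      ext w; simp [Set.mem_iInter]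
    rw [this]
    exact hF.isClosed.inter (isClosed_biInter fun z _ =>
      isClosed_le hGxbcont continuous_const)
  have hYcomp : IsCompact (Y xb) := hF.of_isClosed_subset hYclosed hYsub
  -- bound on G xb y - Φ xb
  have h1 : G xb y ≤ G x y + L * ‖x - xb‖ := by
    have := hLip y hyF x hx
    have := abs_le.mp this
    linarith [this.1]
  have h2 : G x y ≤ G x y0 := hymin y0 hy0F
  have h3 : G x y0 ≤ Φ xb + L * ‖x - xb‖ := by
    have h := abs_le.mp (hLip y0 hy0F x hx)
    have hy0' : G xb y0 = Φ xb := hy0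
    linarith [h.2]
  have hΦle : Φ xb ≤ G xb y := hlb ⟨y, hyF, rfl⟩
  have hbound : |Φ xb - G xb y| ≤ 2 * L * ‖x - xb‖ := by
    rw [abs_sub_comm, abs_of_nonneg (by linarith)]
    linarith
  -- infDist bound
  have hnx : (0:ℝ) ≤ ‖x - xb‖ := norm_nonneg _
  have hrhs : c₀ * |Φ xb - G xb y| ^ τ ≤
      (2 * c₀ ^ ((1:ℝ)/τ) * L) ^ τ * ‖x - xb‖ ^ τ := by
    have key : (2 * c₀ ^ ((1:ℝ)/τ) * L) ^ τ * ‖x - xb‖ ^ τ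
        = c₀ * (2 * L * ‖x - xb‖) ^ τ := by
      rw [Real.mul_rpow (by positivity) hL.le, Real.mul_rpow (by positivity)
        (Real.rpow_nonneg hc₀.le _), ← Real.rpow_mul hc₀.le,
        one_div, inv_mul_cancel₀ hτ0.ne', Real.rpow_one,
        Real.mul_rpow (by positivity) hnx, Real.mul_rpow (by norm_num) hL.le]
      ring
    rw [key]
    exact mul_le_mul_of_nonneg_left
      (Real.rpow_le_rpow (abs_nonneg _) hbound hτ0.le) hc₀.le
  have hinf : Metric.infDist y (Y xb) ≤
      (2 * c₀ ^ ((1:ℝ)/τ) * L) ^ τ * ‖x - xb‖ ^ τ :=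
    le_trans (hLoj y hyF) hrhs
  -- attain infDist
  obtain ⟨w, hwmem, hw⟩ := hYcomp.exists_infDist_eq_dist ⟨y0, hy0mem⟩ y
  rw [Set.mem_add]
  refine ⟨w, hwmem, y - w, ?_, by abel⟩
  rw [Metric.mem_closedBall, dist_zero_right, ← dist_eq_norm]
  rw [hw] at hinf
  exact hinf
end

section
/- Let φ: ℝᵐ → ℝ be convex and differentiable, F = {w ∈ ℝᵐ : h_j(w) ≤ 0, j = 1,…,r} with each h_j continuously differentiable, and suppose F is convex, the Slater condition holds (∃y₀ with h_j(y₀) < 0 for all j), and the nondegeneracy condition holds (y ∈ F and h_j(y) = 0 imply ∇h_j(y) ≠ 0). Then y ∈ F satisfies the KKT conditions—∃λ_j ≥ 0 with ∇φ(y) + Σ_j λ_j ∇h_j(y) = 0 and λ_j h_j(y) = 0—if and only if y is a global minimizer of φ over F. -/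
open Set Filter Topology
open scoped RealInnerProductSpace Gradient

/-!
For a convex feasible set `F`, a convex differentiable `φ` is minimized over `F` at `y` exactly
when `⟪∇φ y, z - y⟫ ≥ 0` for all `z ∈ F`. An active constraint `h j` attains its maximum `0`
over `F` at `y`, so `⟪∇(h j) y, z - y⟫ ≤ 0` although `h j` need not be convex; this turns a KKT
point into a minimizer. Conversely, the Slater point `y₀` is interior to `F`, so nondegeneracy
makes `y₀ - y` a strict descent direction of every active constraint. Perturbing along it shows
`⟪∇φ y, x⟫ ≥ 0` on the linearized cone `{x | ⟪∇(h j) y, x⟫ ≤ 0 for active j}`, and Farkas' lemma,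
proved by induction on the number of generators by projecting along one of them, yields the
multipliers.
-/

section Farkas

variable {E : Type*} [NormedAddCommGroup E] [InnerProductSpace ℝ E]

/-- The projection onto the hyperplane `x⊥` along `p`, provided `⟪p, x⟫ ≠ 0`. -/
noncomputable def projAlong (p x : E) : E →ₗ[ℝ] E :=
  LinearMap.id - (⟪p, x⟫⁻¹ • innerₗ E x).smulRight p

theorem projAlong_apply (p x v : E) : projAlong p x v = v - (⟪x, v⟫ / ⟪p, x⟫) • p := by
  simp [projAlong, div_eq_inv_mul]

theorem projAlong_self {p x : E} (hpx : ⟪p, x⟫ ≠ 0) : projAlong p x p = 0 := by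
  rw [projAlong_apply, real_inner_comm, div_self hpx, one_smul, sub_self]

theorem inner_projAlong (p x v z : E) :
    ⟪projAlong p x v, z⟫ = ⟪v, z - (⟪p, z⟫ / ⟪p, x⟫) • x⟫ := by
  simp only [projAlong_apply, inner_sub_left, inner_sub_right, real_inner_smul_left,
    real_inner_smul_right, real_inner_comm x v]
  ring

theorem exists_cons_of_projAlong {n : ℕ} {p x b : E} {a : Fin n → E} {μ : Fin n → ℝ}
    (hpx : 0 < ⟪p, x⟫) (hax : ∀ i, ⟪a i, x⟫ ≤ 0) (hbx : 0 < ⟪b, x⟫) (hμ : ∀ i, 0 ≤ μ i)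
    (hb : projAlong p x b = ∑ i, μ i • projAlong p x (a i)) :
    ∃ c : ℝ, 0 ≤ c ∧ b = c • p + ∑ i, μ i • a i := by
  set r := b - ∑ i, μ i • a i
  have hr : projAlong p x r = 0 := by simp [r, hb]
  have hrx : 0 ≤ ⟪r, x⟫ := by
    have : ∑ i, μ i * ⟪a i, x⟫ ≤ 0 :=
      Finset.sum_nonpos fun i _ => mul_nonpos_of_nonneg_of_nonpos (hμ i) (hax i)
    simp only [r, inner_sub_left, sum_inner, real_inner_smul_left]
    linarith
  refine ⟨⟪x, r⟫ / ⟪p, x⟫, div_nonneg (real_inner_comm x r ▸ hrx) hpx.le, ?_⟩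
  rw [projAlong_apply, sub_eq_zero] at hr
  rw [← hr, sub_add_cancel]

theorem farkas_alternative {n : ℕ} (a : Fin n → E) (b : E) :
    (∃ μ : Fin n → ℝ, (∀ i, 0 ≤ μ i) ∧ b = ∑ i, μ i • a i) ∨
      ∃ x, (∀ i, ⟪a i, x⟫ ≤ 0) ∧ 0 < ⟪b, x⟫ := by
  induction n generalizing b with
  | zero =>
    by_cases hb : b = 0
    · exact .inl ⟨0, fun _ => le_rfl, by simp [hb]⟩
    · exact .inr ⟨b, finZeroElim, real_inner_self_pos.2 hb⟩
  | succ n ih =>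
    cases a using Fin.consCases with
    | cons p a =>
      simp only [Fin.forall_fin_succ, Fin.sum_univ_succ, Fin.cons_zero, Fin.cons_succ]
      rcases ih a b with ⟨μ, hμ, hb⟩ | ⟨x, hax, hbx⟩
      · exact .inl ⟨Fin.cons 0 μ, by simpa using hμ, by simpa using hb⟩
      rcases le_or_gt ⟪p, x⟫ 0 with hpx | hpx
      · exact .inr ⟨x, ⟨hpx, hax⟩, hbx⟩
      rcases ih (fun i => projAlong p x (a i)) (projAlong p x b) with
        ⟨μ, hμ, hb⟩ | ⟨z, haz, hbz⟩
      · obtain ⟨c, hc, rfl⟩ := exists_cons_of_projAlong hpx hax hbx hμ hb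
        exact .inl ⟨Fin.cons c μ, ⟨hc, hμ⟩, by simp⟩
      · simp only [inner_projAlong] at haz hbz
        refine .inr ⟨_, ⟨?_, haz⟩, hbz⟩
        rw [← inner_projAlong, projAlong_self hpx.ne', inner_zero_left]

theorem farkas {ι : Type*} [Fintype ι] {a : ι → E} {b : E}
    (h : ∀ x, (∀ i, ⟪a i, x⟫ ≤ 0) → ⟪b, x⟫ ≤ 0) :
    ∃ μ : ι → ℝ, (∀ i, 0 ≤ μ i) ∧ b = ∑ i, μ i • a i := by
  let e := Fintype.equivFin ι
  obtain ⟨μ, hμ, hb⟩ := (farkas_alternative (a ∘ e.symm) b).resolve_right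
    fun ⟨x, hax, hbx⟩ => (h x fun i => by simpa using hax (e i)).not_gt hbx
  exact ⟨μ ∘ e, fun i => hμ (e i), by rw [hb, ← e.sum_comp]; simp⟩

end Farkas

section FirstOrder

variable {E : Type*} [NormedAddCommGroup E] [InnerProductSpace ℝ E] [CompleteSpace E]
  {f : E → ℝ} {s : Set E} {y z : E}

theorem DifferentiableAt.hasDerivAt_add_smul (hf : DifferentiableAt ℝ f y) (v : E) :
    HasDerivAt (fun t : ℝ => f (y + t • v)) ⟪∇ f y, v⟫ 0 := by
  have hline : HasDerivAt (fun t : ℝ => y + t • v) v 0 := by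
    simpa using ((hasDerivAt_id (0 : ℝ)).smul_const v).const_add y
  rw [inner_gradient_left]
  exact (by simpa using hf.hasFDerivAt : HasFDerivAt f (fderiv ℝ f y) (y + (0 : ℝ) • v))
    |>.comp_hasDerivAt 0 hline

theorem IsMinOn.inner_gradient_sub_nonneg (hmin : IsMinOn f s y) (hs : Convex ℝ s)
    (hy : y ∈ s) (hz : z ∈ s) (hf : DifferentiableAt ℝ f y) : 0 ≤ ⟪∇ f y, z - y⟫ := by
  rw [inner_gradient_left]
  exact hmin.localize.hasFDerivWithinAt_nonneg hf.hasFDerivAt.hasFDerivWithinAt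
    (sub_mem_posTangentConeAt_of_segment_subset (hs.segment_subset hy hz))

theorem IsMaxOn.inner_gradient_sub_nonpos (hmax : IsMaxOn f s y) (hs : Convex ℝ s)
    (hy : y ∈ s) (hz : z ∈ s) (hf : DifferentiableAt ℝ f y) : ⟪∇ f y, z - y⟫ ≤ 0 := by
  rw [inner_gradient_left]
  exact hmax.localize.hasFDerivWithinAt_nonpos hf.hasFDerivAt.hasFDerivWithinAt
    (sub_mem_posTangentConeAt_of_segment_subset (hs.segment_subset hy hz))

theorem ConvexOn.inner_gradient_sub_le (hconv : ConvexOn ℝ s f) (hy : y ∈ s) (hz : z ∈ s)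
    (hf : DifferentiableAt ℝ f y) : ⟪∇ f y, z - y⟫ ≤ f z - f y := by
  let line : ℝ →ᵃ[ℝ] E := AffineMap.lineMap y z
  have hline : ∀ t : ℝ, line t = y + t • (z - y) := fun t => by
    simp [line, AffineMap.lineMap_apply, add_comm]
  have hderiv : HasDerivAt (f ∘ line) ⟪∇ f y, z - y⟫ 0 := by
    simpa only [Function.comp_def, hline] using hf.hasDerivAt_add_smul (z - y)
  simpa [slope, line] using
    (hconv.comp_affineMap line).le_slope_of_hasDerivAt (x := 0) (y := 1)
      (by simpa [line] using hy) (by simpa [line] using hz) one_pos hderiv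

theorem ConvexOn.isMinOn_of_inner_gradient_sub_nonneg (hconv : ConvexOn ℝ s f) (hy : y ∈ s)
    (hf : DifferentiableAt ℝ f y) (h : ∀ z ∈ s, 0 ≤ ⟪∇ f y, z - y⟫) : IsMinOn f s y :=
  isMinOn_iff.2 fun z hz => sub_nonneg.1 <| (h z hz).trans (hconv.inner_gradient_sub_le hy hz hf)

theorem DifferentiableAt.eventually_add_smul_neg (hf : DifferentiableAt ℝ f y) (hy : f y ≤ 0)
    {v : E} (hv : f y = 0 → ⟪∇ f y, v⟫ < 0) : ∀ᶠ t in 𝓝[>] (0 : ℝ), f (y + t • v) < 0 := by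
  rcases hy.lt_or_eq with hy | hy
  · have hcont : ContinuousAt (fun t : ℝ => f (y + t • v)) 0 :=
      (hf.hasDerivAt_add_smul v).continuousAt
    exact nhdsWithin_le_nhds (hcont.eventually_lt continuousAt_const (by simpa using hy))
  · have hslope := (hf.hasDerivAt_add_smul v).tendsto_slope_zero_right
    filter_upwards [hslope.eventually (eventually_lt_nhds (hv hy)), self_mem_nhdsWithin]
      with t hneg (ht : 0 < t)
    simpa [hy, smul_eq_mul, inv_mul_lt_iff₀ ht] using hneg

end FirstOrder

theorem inner_lt_of_mem_interior {E : Type*} [NormedAddCommGroup E] [InnerProductSpace ℝ E]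
    {s : Set E} {a x : E} {c : ℝ} (ha : a ≠ 0) (hx : x ∈ interior s)
    (hs : ∀ z ∈ s, ⟪a, z⟫ ≤ c) : ⟪a, x⟫ < c := by
  obtain ⟨ε, hε, hball⟩ := Metric.mem_nhds_iff.1 (mem_interior_iff_mem_nhds.1 hx)
  have hmem : x + (ε / 2 / ‖a‖) • a ∈ s := hball <| by
    rw [Metric.mem_ball, dist_eq_norm, add_sub_cancel_left, norm_smul, Real.norm_eq_abs,
      abs_of_pos (by positivity), div_mul_cancel₀ _ (norm_ne_zero_iff.2 ha)]
    linarith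
  have := hs _ hmem
  rw [inner_add_right, real_inner_smul_right, real_inner_self_eq_norm_sq] at this
  have : 0 < ε / 2 / ‖a‖ * ‖a‖ ^ 2 := by positivity
  linarith

theorem mem_interior_of_forall_lt {X ι : Type*} [TopologicalSpace X] [Finite ι]
    {h : ι → X → ℝ} (hh : ∀ j, Continuous (h j)) {y₀ : X} (hy₀ : ∀ j, h j y₀ < 0) :
    y₀ ∈ interior {w | ∀ j, h j w ≤ 0} := by
  have hopen : IsOpen {w | ∀ j, h j w < 0} := by
    simpa only [ofPred_forall] using isOpen_iInter_of_finite fun j =>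
      isOpen_lt (hh j) continuous_const
  exact interior_maximal (fun w hw j => (hw j).le) hopen hy₀

section Constraints

variable {E : Type*} [NormedAddCommGroup E] [InnerProductSpace ℝ E] [CompleteSpace E]
  {ι : Type*} {h : ι → E → ℝ} {y g : E}

theorem inner_gradient_sub_nonpos_of_active (hconv : Convex ℝ {w | ∀ j, h j w ≤ 0})
    (hy : ∀ j, h j y ≤ 0) {z : E} (hz : ∀ j, h j z ≤ 0) {j : ι}
    (hd : DifferentiableAt ℝ (h j) y) (hj : h j y = 0) : ⟪∇ (h j) y, z - y⟫ ≤ 0 :=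
  IsMaxOn.inner_gradient_sub_nonpos (isMaxOn_iff.2 fun w (hw : ∀ j, h j w ≤ 0) => hj ▸ hw j)
    hconv hy hz hd

theorem inner_sub_nonneg_of_kkt [Fintype ι] (hconv : Convex ℝ {w | ∀ j, h j w ≤ 0})
    (hy : ∀ j, h j y ≤ 0) (hd : ∀ j, DifferentiableAt ℝ (h j) y) {lam : ι → ℝ}
    (hlam : ∀ j, 0 ≤ lam j) (hgrad : g + ∑ j, lam j • ∇ (h j) y = 0)
    (hcs : ∀ j, lam j * h j y = 0) {z : E} (hz : ∀ j, h j z ≤ 0) : 0 ≤ ⟪g, z - y⟫ := by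
  have hterm : ∀ j, lam j * ⟪∇ (h j) y, z - y⟫ ≤ 0 := fun j => by
    rcases mul_eq_zero.1 (hcs j) with hj | hj
    · simp [hj]
    · exact mul_nonpos_of_nonneg_of_nonpos (hlam j)
        (inner_gradient_sub_nonpos_of_active hconv hy hz (hd j) hj)
  have hg : ⟪g, z - y⟫ = -∑ j, lam j * ⟪∇ (h j) y, z - y⟫ := by
    rw [eq_neg_of_add_eq_zero_left hgrad, inner_neg_left, sum_inner]
    simp only [real_inner_smul_left]
  rw [hg, neg_nonneg]
  exact Finset.sum_nonpos fun j _ => hterm j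

theorem inner_nonneg_of_forall_active_inner_lt [Finite ι]
    (hmin : ∀ z, (∀ j, h j z ≤ 0) → 0 ≤ ⟪g, z - y⟫) (hy : ∀ j, h j y ≤ 0)
    (hd : ∀ j, DifferentiableAt ℝ (h j) y) {v : E}
    (hv : ∀ j, h j y = 0 → ⟪∇ (h j) y, v⟫ < 0) : 0 ≤ ⟪g, v⟫ := by
  have hfeas : ∀ᶠ t in 𝓝[>] (0 : ℝ), ∀ j, h j (y + t • v) < 0 :=
    eventually_all.2 fun j => (hd j).eventually_add_smul_neg (hy j) (hv j)
  obtain ⟨t, ht, htpos⟩ := (hfeas.and self_mem_nhdsWithin).exists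
  have := hmin _ fun j => (ht j).le
  rw [add_sub_cancel_left, real_inner_smul_right] at this
  exact nonneg_of_mul_nonneg_right this htpos

theorem inner_nonneg_of_forall_active_inner_nonpos [Finite ι]
    (hmin : ∀ z, (∀ j, h j z ≤ 0) → 0 ≤ ⟪g, z - y⟫) (hy : ∀ j, h j y ≤ 0)
    (hd : ∀ j, DifferentiableAt ℝ (h j) y) {d : E}
    (hdescent : ∀ j, h j y = 0 → ⟪∇ (h j) y, d⟫ < 0) {x : E}
    (hx : ∀ j, h j y = 0 → ⟪∇ (h j) y, x⟫ ≤ 0) : 0 ≤ ⟪g, x⟫ := by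
  have hperturb : ∀ ε > (0 : ℝ), 0 ≤ ⟪g, x + ε • d⟫ := fun ε hε =>
    inner_nonneg_of_forall_active_inner_lt hmin hy hd fun j hj => by
      rw [inner_add_right, real_inner_smul_right]
      nlinarith [hx j hj, hdescent j hj]
  have hlim : Tendsto (fun ε : ℝ => ⟪g, x + ε • d⟫) (𝓝[>] 0) (𝓝 ⟪g, x⟫) := by
    have hcont : Continuous fun ε : ℝ => ⟪g, x + ε • d⟫ := by fun_prop
    simpa using (hcont.tendsto 0).mono_left nhdsWithin_le_nhds
  exact ge_of_tendsto hlim (eventually_nhdsWithin_of_forall hperturb)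

theorem exists_kkt_of_inner_sub_nonneg [Fintype ι] (hconv : Convex ℝ {w | ∀ j, h j w ≤ 0})
    (hh : ∀ j, Differentiable ℝ (h j))
    (hslater : ∃ y₀, ∀ j, h j y₀ < 0) (hnd : ∀ j, h j y = 0 → ∇ (h j) y ≠ 0)
    (hy : ∀ j, h j y ≤ 0) (hmin : ∀ z, (∀ j, h j z ≤ 0) → 0 ≤ ⟪g, z - y⟫) :
    ∃ lam : ι → ℝ, (∀ j, 0 ≤ lam j) ∧ g + ∑ j, lam j • ∇ (h j) y = 0 ∧
      ∀ j, lam j * h j y = 0 := by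
  classical
  obtain ⟨y₀, hy₀⟩ := hslater
  have hint := mem_interior_of_forall_lt (fun j => (hh j).continuous) hy₀
  have hdescent : ∀ j, h j y = 0 → ⟪∇ (h j) y, y₀ - y⟫ < 0 := fun j hj => by
    have := inner_lt_of_mem_interior (c := ⟪∇ (h j) y, y⟫) (hnd j hj) hint fun z hz => by
      have := inner_gradient_sub_nonpos_of_active hconv hy hz (hh j y) hj
      rwa [inner_sub_right, sub_nonpos] at this
    rwa [inner_sub_right, sub_neg]
  let A j := if h j y = 0 then ∇ (h j) y else 0
  obtain ⟨μ, hμ, hgμ⟩ := farkas (a := A) (b := -g) fun x hx => by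
    have := inner_nonneg_of_forall_active_inner_nonpos hmin hy (fun j => hh j y) hdescent
      (x := x) fun j hj => by simpa [A, hj] using hx j
    rwa [inner_neg_left, neg_nonpos]
  refine ⟨fun j => if h j y = 0 then μ j else 0, fun j => ?_, ?_, fun j => ?_⟩
  · dsimp only
    split_ifs <;> simp [hμ j]
  · have hsum : ∑ j, (if h j y = 0 then μ j else 0) • ∇ (h j) y = ∑ j, μ j • A j :=
      Finset.sum_congr rfl fun j _ => by split_ifs <;> simp [A, *]
    rw [hsum, ← hgμ, add_neg_cancel]
  · dsimp only
    split_ifs with hj <;> simp [hj]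

end Constraints

theorem stmt5 {m r : ℕ}
    (φ : EuclideanSpace ℝ (Fin m) → ℝ)
    (hφconv : ConvexOn ℝ univ φ) (hφdiff : Differentiable ℝ φ)
    (h : Fin r → EuclideanSpace ℝ (Fin m) → ℝ)
    (hsmooth : ∀ j, ContDiff ℝ 1 (h j))
    (F : Set (EuclideanSpace ℝ (Fin m)))
    (hFdef : F = {w | ∀ j, h j w ≤ 0})
    (hFconv : Convex ℝ F)
    -- Slater condition
    (hSlater : ∃ y₀, ∀ j, h j y₀ < 0)
    -- nondegeneracy condition
    (hnd : ∀ y ∈ F, ∀ j, h j y = 0 → gradient (h j) y ≠ 0)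
    (y : EuclideanSpace ℝ (Fin m)) (hy : y ∈ F) :
    -- KKT ↔ global minimizer
    ((∃ lam : Fin r → ℝ, (∀ j, 0 ≤ lam j) ∧
        gradient φ y + ∑ j, lam j • gradient (h j) y = 0 ∧
        ∀ j, lam j * h j y = 0)
      ↔ ∀ z ∈ F, φ y ≤ φ z) := by
  subst hFdef
  have hh : ∀ j, Differentiable ℝ (h j) := fun j => (hsmooth j).differentiable one_ne_zero
  rw [← isMinOn_iff]
  constructor
  · rintro ⟨lam, hlam, hgrad, hcs⟩
    exact (hφconv.subset (subset_univ _) hFconv).isMinOn_of_inner_gradient_sub_nonneg hy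
      (hφdiff y) fun z hz =>
        inner_sub_nonneg_of_kkt hFconv hy (fun j => hh j y) hlam hgrad hcs hz
  · intro hmin
    exact exists_kkt_of_inner_sub_nonneg hFconv hh hSlater (hnd y hy) hy fun z hz =>
      hmin.inner_gradient_sub_nonneg hFconv hy hz (hφdiff y)
end

section
/- For the bilevel problem: minimize x + y subject to x ∈ [-1,1] and y ∈ argmin_{w ∈ [-1,1]}(x w²/2 - w³/3), the unique global minimizer is (x,y) = (-1, 1) and the global minimum value is 0. -/
open Set

/-- Lower-level objective `w ↦ x w²/2 - w³/3`. -/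
noncomputable def gLL (x w : ℝ) : ℝ := x * w ^ 2 / 2 - w ^ 3 / 3

/-- Argmin set of `gLL x` over `[-1,1]`. -/
noncomputable def Yll (x : ℝ) : Set ℝ :=
  {w ∈ Icc (-1 : ℝ) 1 | ∀ v ∈ Icc (-1 : ℝ) 1, gLL x w ≤ gLL x v}

/-- Bilevel feasible set. -/
noncomputable def FeasEx : Set (ℝ × ℝ) := {p | p.1 ∈ Icc (-1 : ℝ) 1 ∧ p.2 ∈ Yll p.1}

theorem stmt11 :
    ((-1, 1) : ℝ × ℝ) ∈ FeasEx ∧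
    (∀ q ∈ FeasEx, (0 : ℝ) ≤ q.1 + q.2) ∧
    (((-1 : ℝ) + 1) = (0 : ℝ)) ∧
    (∀ q ∈ FeasEx, q.1 + q.2 = 0 → q = ((-1 : ℝ), (1 : ℝ))) := by
  refine ⟨⟨?_, ?_, ?_⟩, ?_, by norm_num, ?_⟩
  · constructor <;> norm_num
  · constructor <;> norm_num
  · intro v hv
    obtain ⟨h1, h2⟩ := hv
    simp only [gLL]
    nlinarith [mul_nonneg (by linarith : (0:ℝ) ≤ 1 - v) (by nlinarith [sq_nonneg (2*v+2)] : (0:ℝ) ≤ 2*v^2 + 5*v + 5)]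
  · rintro ⟨x, y⟩ ⟨⟨hx1, hx2⟩, ⟨⟨hy1, hy2⟩, hmin⟩⟩
    have h0 := hmin 0 (by constructor <;> norm_num)
    have h1 := hmin 1 (by constructor <;> norm_num)
    simp only [gLL] at h0 h1
    norm_num at h0 h1
    nlinarith [sq_nonneg (2*y+1), mul_nonneg (by linarith : (0:ℝ) ≤ 1 - y) (sq_nonneg (2*y+1)), sq_nonneg (x+y), mul_nonneg (by linarith : (0:ℝ) ≤ 1 - y) (by linarith : (0:ℝ) ≤ 1 + y)]
  · rintro ⟨x, y⟩ ⟨⟨hx1, hx2⟩, ⟨⟨hy1, hy2⟩, hmin⟩⟩ hsum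
    simp only at hsum
    have hy : y = -x := by linarith
    subst hy
    have h0 := hmin 0 (by constructor <;> norm_num)
    have h1 := hmin 1 (by constructor <;> norm_num)
    simp only [gLL] at h0 h1
    norm_num at h0 h1
    have hx : x = -1 := by
      nlinarith [sq_nonneg (2*x-1), mul_nonneg (by linarith : (0:ℝ) ≤ x + 1) (by nlinarith [sq_nonneg (2*x-1)] : (0:ℝ) ≤ 5*x^2 - 5*x + 2)]
    subst hx
    norm_num
end

section
/- Let K ⊆ ℝⁿ × ℝᵐ and F ⊆ ℝᵐ be compact, let f, G be continuous on ℝⁿ × ℝᵐ, and let J(x) = min_{w ∈ F} G(x,w) (assume F ≠ ∅ so J is well-defined and continuous). For ε ≥ 0, let S_ε = {(x,y) ∈ K : y ∈ F, G(x,y) - J(x) ≤ ε} and val(ε) = inf{f(x,y) : (x,y) ∈ S_ε}, assuming S₀ ≠ ∅. Let ε_k → 0⁺, δ_k → 0⁺, and let (x_k, y_k) ∈ S_{ε_k} with f(x_k, y_k) ≤ val(ε_k) + δ_k. Then (x_k, y_k) is bounded and every cluster point (x̄, ȳ) satisfies (x̄, ȳ) ∈ S₀ and f(x̄, ȳ)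 = val(0); i.e., (x̄, ȳ) is a global minimizer of the problem with ε = 0. -/
/-! A cluster point of the approximate solutions is feasible for the bilevel problem because
`S ε` is described by closed conditions up to the slack `ε → 0`: if `w` attains `J x̄`, then
`G (x, y) - G (x, w) ≤ ε` along the sequence and this passes to the limit, giving `G (x̄, ȳ) ≤ J x̄`.
It is optimal because `S 0 ⊆ S ε` gives `f (x_k, y_k) ≤ val 0 + δ_k`, which also passes to the
limit, while `f (x̄, ȳ) ≥ val 0` holds for every point of `S 0`. -/

open Set Filter Topology

theorem MapClusterPt.prodMk_of_tendsto {ι X Y : Type*} [TopologicalSpace X] [TopologicalSpace Y]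
    {l : Filter ι} {z : ι → X} {g : ι → Y} {p : X} {q : Y}
    (hz : MapClusterPt p l z) (hg : Tendsto g l (𝓝 q)) :
    MapClusterPt (p, q) l (fun k => (z k, g k)) := by
  rw [((𝓝 p).basis_sets.prod_nhds (𝓝 q).basis_sets).mapClusterPt_iff_frequently]
  rintro ⟨s, t⟩ ⟨hs, ht⟩
  exact (hz.frequently hs).and_eventually (hg ht)

theorem le_of_mapClusterPt_of_tendsto {ι X α : Type*} [TopologicalSpace X] [TopologicalSpace α]
    [Preorder α] [OrderClosedTopology α] {l : Filter ι} {z : ι → X} {g : ι → α} {p : X} {L : α}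
    {φ : X → α} (hφ : Continuous φ) (hz : MapClusterPt p l z) (hg : Tendsto g l (𝓝 L))
    (h : ∀ᶠ k in l, φ (z k) ≤ g k) : φ p ≤ L :=
  (isClosed_le (hφ.comp continuous_fst) continuous_snd).mem_of_mapClusterPt
    (hz.prodMk_of_tendsto hg) h

section RelaxedFeasibleSet

variable {X Y : Type*} {K : Set (X × Y)} {F : Set Y} {G : X × Y → ℝ} {J : X → ℝ}

variable (K F G J) in
def relaxedFeasibleSet (ε : ℝ) : Set (X × Y) :=
  {p ∈ K | p.2 ∈ F ∧ G p - J p.1 ≤ ε}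

theorem relaxedFeasibleSet_subset {ε : ℝ} : relaxedFeasibleSet K F G J ε ⊆ K :=
  fun _ hp => hp.1

theorem relaxedFeasibleSet_mono : Monotone (relaxedFeasibleSet K F G J) :=
  fun _ _ hεε' _ hp => ⟨hp.1, hp.2.1, hp.2.2.trans hεε'⟩

theorem mem_relaxedFeasibleSet_zero_of_mapClusterPt [TopologicalSpace X] [TopologicalSpace Y]
    {ι : Type*} {l : Filter ι}
    (hK : IsClosed K) (hF : IsClosed F) (hG : Continuous G)
    (hJ : ∀ x, IsLeast ((fun w => G (x, w)) '' F) (J x))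
    {ε : ι → ℝ} (hε : Tendsto ε l (𝓝 0)) {z : ι → X × Y}
    (hz : ∀ᶠ k in l, z k ∈ relaxedFeasibleSet K F G J (ε k)) {p : X × Y}
    (hp : MapClusterPt p l z) : p ∈ relaxedFeasibleSet K F G J 0 := by
  obtain ⟨w, hwF, hw⟩ := (hJ p.1).1
  have hpK : p ∈ K := hK.mem_of_mapClusterPt hp (hz.mono fun _ hk => hk.1)
  have hpF : p.2 ∈ F :=
    hF.mem_of_mapClusterPt (hp.continuousAt_comp continuous_snd.continuousAt)
      (hz.mono fun _ hk => hk.2.1)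
  have hGw : G p - G (p.1, w) ≤ 0 := by
    refine le_of_mapClusterPt_of_tendsto (φ := fun q => G q - G (q.1, w))
      (hG.sub (hG.comp (continuous_fst.prodMk continuous_const))) hp hε (hz.mono fun k hk => ?_)
    have hJw : J (z k).1 ≤ G ((z k).1, w) := (hJ (z k).1).2 ⟨w, hwF, rfl⟩
    linarith [hk.2.2]
  exact ⟨hpK, hpF, hw ▸ hGw⟩

end RelaxedFeasibleSet

theorem stmt14_general {n m : ℕ}
    (K : Set (EuclideanSpace ℝ (Fin n) × EuclideanSpace ℝ (Fin m)))
    (F : Set (EuclideanSpace ℝ (Fin m)))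
    (hK : IsCompact K) (hF : IsCompact F)
    (f G : EuclideanSpace ℝ (Fin n) × EuclideanSpace ℝ (Fin m) → ℝ)
    (hf : Continuous f) (hG : Continuous G)
    (J : EuclideanSpace ℝ (Fin n) → ℝ)
    (hJ : ∀ x, IsLeast ((fun w => G (x, w)) '' F) (J x))
    (S : ℝ → Set (EuclideanSpace ℝ (Fin n) × EuclideanSpace ℝ (Fin m)))
    (hS : ∀ ε, S ε = {p ∈ K | p.2 ∈ F ∧ G p - J p.1 ≤ ε})
    (val : ℝ → ℝ) (hval : ∀ ε, val ε = sInf (f '' S ε))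
    (hS0 : (S 0).Nonempty)
    (ε δ : ℕ → ℝ)
    (hεpos : ∀ k, 0 < ε k)
    (hε : Tendsto ε atTop (nhds 0)) (hδ : Tendsto δ atTop (nhds 0))
    (z : ℕ → EuclideanSpace ℝ (Fin n) × EuclideanSpace ℝ (Fin m))
    (hzfeas : ∀ k, z k ∈ S (ε k))
    (hzval : ∀ k, f (z k) ≤ val (ε k) + δ k) :
    Bornology.IsBounded (range z) ∧
    ∀ p : EuclideanSpace ℝ (Fin n) × EuclideanSpace ℝ (Fin m),
      MapClusterPt p atTop z → p ∈ S 0 ∧ f p = val 0 := by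
  obtain rfl : S = relaxedFeasibleSet K F G J := funext hS
  obtain rfl : val = fun e => sInf (f '' relaxedFeasibleSet K F G J e) := funext hval
  have hbdd : ∀ e, BddBelow (f '' relaxedFeasibleSet K F G J e) := fun _ =>
    (hK.bddBelow_image hf.continuousOn).mono (image_mono relaxedFeasibleSet_subset)
  refine ⟨hK.isBounded.subset (range_subset_iff.2 fun k => relaxedFeasibleSet_subset (hzfeas k)),
    fun p hp => ?_⟩
  have hp0 := mem_relaxedFeasibleSet_zero_of_mapClusterPt hK.isClosed hF.isClosed hG hJ hε
    (.of_forall hzfeas) hp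
  have hval_le : ∀ k, sInf (f '' relaxedFeasibleSet K F G J (ε k)) ≤
      sInf (f '' relaxedFeasibleSet K F G J 0) := fun k =>
    csInf_le_csInf (hbdd _) (hS0.image f) (image_mono (relaxedFeasibleSet_mono (hεpos k).le))
  refine ⟨hp0, le_antisymm ?_ (csInf_le (hbdd 0) (mem_image_of_mem f hp0))⟩
  simpa using le_of_mapClusterPt_of_tendsto hf hp (tendsto_const_nhds.add hδ)
    (.of_forall fun k => (hzval k).trans (add_le_add_left (hval_le k) _))

theorem stmt14 {n m : ℕ}
    (K : Set (EuclideanSpace ℝ (Fin n) × EuclideanSpace ℝ (Fin m)))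
    (F : Set (EuclideanSpace ℝ (Fin m)))
    (hK : IsCompact K) (hF : IsCompact F) (hFne : F.Nonempty)
    (f G : EuclideanSpace ℝ (Fin n) × EuclideanSpace ℝ (Fin m) → ℝ)
    (hf : Continuous f) (hG : Continuous G)
    (J : EuclideanSpace ℝ (Fin n) → ℝ)
    (hJ : ∀ x, IsLeast ((fun w => G (x, w)) '' F) (J x))
    (S : ℝ → Set (EuclideanSpace ℝ (Fin n) × EuclideanSpace ℝ (Fin m)))
    (hS : ∀ ε, S ε = {p ∈ K | p.2 ∈ F ∧ G p - J p.1 ≤ ε})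
    (val : ℝ → ℝ) (hval : ∀ ε, val ε = sInf (f '' S ε))
    (hS0 : (S 0).Nonempty)
    (ε δ : ℕ → ℝ)
    (hεpos : ∀ k, 0 < ε k) (hδpos : ∀ k, 0 < δ k)
    (hε : Tendsto ε atTop (nhds 0)) (hδ : Tendsto δ atTop (nhds 0))
    (z : ℕ → EuclideanSpace ℝ (Fin n) × EuclideanSpace ℝ (Fin m))
    (hzfeas : ∀ k, z k ∈ S (ε k))
    (hzval : ∀ k, f (z k) ≤ val (ε k) + δ k) :
    Bornology.IsBounded (range z) ∧
    ∀ p : EuclideanSpace ℝ (Fin n) × EuclideanSpace ℝ (Fin m),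
      MapClusterPt p atTop z → p ∈ S 0 ∧ f p = val 0 :=
  stmt14_general K F hK hF f G hf hG J hJ S hS val hval hS0 ε δ hεpos hε hδ z hzfeas hzval
end

section
/- With the notation of the previous statement (K, F compact, f, G continuous, J(x) = min_{w∈F} G(x,w), S_ε = {(x,y) ∈ K : y ∈ F, G(x,y) - J(x) ≤ ε}, val(ε) = inf_{S_ε} f, S₀ ≠ ∅), the function ε ↦ val(ε) is nonincreasing, lower semicontinuous, and right-continuous on [0,∞). -/
/-!
Write `val ε` as the minimum of `f` over the compact sublevel set `{p ∈ C | g p ≤ ε}` of the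
continuous gap function `g p = G p - J p.1` on the compact set `C = {p ∈ K | p.2 ∈ F}`.
Monotonicity is inclusion of sublevel sets. For lower semicontinuity at `ε`, take `c < val ε`:
the compact set `{p ∈ C | f p ≤ c}` misses the `ε`-sublevel set, so `g > ε` on it, and by
compactness `g > ε'` on it for all `ε'` near `ε`; hence every minimiser for `ε'` has `f > c`.
Right-continuity follows since an antitone function is upper semicontinuous from the right.
-/

open Set Filter Topology

theorem continuous_of_forall_isLeast_image {X Y : Type*} [TopologicalSpace X]
    [TopologicalSpace Y] {F : Set Y} (hF : IsCompact F) {G : X × Y → ℝ} (hG : Continuous G)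
    {J : X → ℝ} (hJ : ∀ x, IsLeast ((fun w => G (x, w)) '' F) (J x)) : Continuous J := by
  have h : Continuous fun x => sInf ((fun w => G (x, w)) '' F) :=
    hF.continuous_sInf (f := fun x w => G (x, w)) hG
  convert h using 1
  exact funext fun x => (hJ x).csInf_eq.symm

theorem AntitoneOn.continuousWithinAt_Ici_of_lowerSemicontinuousWithinAt {v : ℝ → ℝ} {x : ℝ}
    (hv : AntitoneOn v (Ici x)) (hlsc : LowerSemicontinuousWithinAt v (Ici x) x) :
    ContinuousWithinAt v (Ici x) x := by
  refine continuousWithinAt_iff_lower_upperSemicontinuousWithinAt.mpr ⟨hlsc, fun c hc => ?_⟩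
  filter_upwards [self_mem_nhdsWithin] with y hy
  exact (hv self_mem_Ici hy hy).trans_lt hc

theorem sublevel_mono {X : Type*} {C : Set X} {g : X → ℝ} {ε ε' : ℝ} (h : ε ≤ ε') :
    {p ∈ C | g p ≤ ε} ⊆ {p ∈ C | g p ≤ ε'} :=
  fun _ hp => ⟨hp.1, hp.2.trans h⟩

section ConstrainedInf

variable {X : Type*} [TopologicalSpace X] {C : Set X} {f g : X → ℝ}

noncomputable def constrainedInf (C : Set X) (f g : X → ℝ) (ε : ℝ) : ℝ :=
  sInf (f '' {p ∈ C | g p ≤ ε})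

theorem isCompact_sublevel (hC : IsCompact C) (hg : Continuous g) (ε : ℝ) :
    IsCompact {p ∈ C | g p ≤ ε} :=
  hC.inter_right (isClosed_le hg continuous_const)

theorem isLeast_constrainedInf (hC : IsCompact C) (hf : Continuous f) (hg : Continuous g)
    {ε : ℝ} (hne : {p ∈ C | g p ≤ ε}.Nonempty) :
    IsLeast (f '' {p ∈ C | g p ≤ ε}) (constrainedInf C f g ε) :=
  ((isCompact_sublevel hC hg ε).image hf).isLeast_sInf (hne.image f)

theorem constrainedInf_antitoneOn (hC : IsCompact C) (hf : Continuous f) (hg : Continuous g)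
    {a : ℝ} (ha : {p ∈ C | g p ≤ a}.Nonempty) : AntitoneOn (constrainedInf C f g) (Ici a) :=
  fun _ hε _ _ hεε' =>
    csInf_le_csInf ((isCompact_sublevel hC hg _).image hf).bddBelow
      ((ha.mono (sublevel_mono hε)).image f) (image_mono (sublevel_mono hεε'))

theorem constrainedInf_lowerSemicontinuousOn (hC : IsCompact C) (hf : Continuous f)
    (hg : Continuous g) {a : ℝ} (ha : {p ∈ C | g p ≤ a}.Nonempty) :
    LowerSemicontinuousOn (constrainedInf C f g) (Ici a) := by
  intro ε _ c hc
  have hgap : ∀ p ∈ {p ∈ C | f p ≤ c}, ε < g p := fun p hp => by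
    by_contra! hle
    exact hc.not_ge <|
      (isLeast_constrainedInf hC hf hg ⟨p, hp.1, hle⟩).2 ⟨p, ⟨hp.1, hle⟩, rfl⟩ |>.trans hp.2
  have hnear : ∀ᶠ ε' in 𝓝 ε, ∀ p ∈ {p ∈ C | f p ≤ c}, ε' < g p :=
    (isCompact_sublevel hC hf c).eventually_forall_of_forall_eventually fun p hp =>
      continuous_fst.continuousAt.eventually_lt (hg.comp continuous_snd).continuousAt (hgap p hp)
  filter_upwards [self_mem_nhdsWithin, nhdsWithin_le_nhds hnear] with ε' hε' hfar
  obtain ⟨⟨q, hq, hfq⟩, -⟩ :=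
    isLeast_constrainedInf hC hf hg (ha.mono (sublevel_mono (mem_Ici.mp hε')))
  rw [← hfq]
  by_contra! hle
  exact (hfar q ⟨hq.1, hle⟩).not_ge hq.2

end ConstrainedInf

theorem stmt15_general {n m : ℕ}
    (K : Set (EuclideanSpace ℝ (Fin n) × EuclideanSpace ℝ (Fin m)))
    (F : Set (EuclideanSpace ℝ (Fin m)))
    (hK : IsCompact K) (hF : IsCompact F)
    (f G : EuclideanSpace ℝ (Fin n) × EuclideanSpace ℝ (Fin m) → ℝ)
    (hf : Continuous f) (hG : Continuous G)
    (J : EuclideanSpace ℝ (Fin n) → ℝ)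
    (hJ : ∀ x, IsLeast ((fun w => G (x, w)) '' F) (J x))
    (S : ℝ → Set (EuclideanSpace ℝ (Fin n) × EuclideanSpace ℝ (Fin m)))
    (hS : ∀ ε, S ε = {p ∈ K | p.2 ∈ F ∧ G p - J p.1 ≤ ε})
    (val : ℝ → ℝ) (hval : ∀ ε, val ε = sInf (f '' S ε))
    (hS0 : (S 0).Nonempty) :
    AntitoneOn val (Ici 0) ∧
    LowerSemicontinuousOn val (Ici 0) ∧
    ∀ ε ∈ Ici (0 : ℝ), ContinuousWithinAt val (Ici ε) ε := by
  set C := K ∩ Prod.snd ⁻¹' F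
  set g := fun p : EuclideanSpace ℝ (Fin n) × EuclideanSpace ℝ (Fin m) => G p - J p.1
  have hC : IsCompact C := hK.inter_right (hF.isClosed.preimage continuous_snd)
  have hg : Continuous g :=
    hG.sub ((continuous_of_forall_isLeast_image hF hG hJ).comp continuous_fst)
  have hS_eq : ∀ ε, S ε = {p ∈ C | g p ≤ ε} := fun ε => by
    rw [hS]; ext p; simp only [mem_inter_iff, mem_preimage, and_assoc, C, g]
  have hval_eq : val = constrainedInf C f g := funext fun ε => by rw [hval, hS_eq]; rfl
  rw [hS_eq] at hS0
  have hanti := constrainedInf_antitoneOn hC hf hg hS0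
  have hlsc := constrainedInf_lowerSemicontinuousOn hC hf hg hS0
  subst hval_eq
  refine ⟨hanti, hlsc, fun ε hε => ?_⟩
  exact (hanti.mono (Ici_subset_Ici.mpr hε)).continuousWithinAt_Ici_of_lowerSemicontinuousWithinAt
    ((hlsc ε hε).mono (Ici_subset_Ici.mpr hε))

theorem stmt15 {n m : ℕ}
    (K : Set (EuclideanSpace ℝ (Fin n) × EuclideanSpace ℝ (Fin m)))
    (F : Set (EuclideanSpace ℝ (Fin m)))
    (hK : IsCompact K) (hF : IsCompact F) (hFne : F.Nonempty)
    (f G : EuclideanSpace ℝ (Fin n) × EuclideanSpace ℝ (Fin m) → ℝ)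
    (hf : Continuous f) (hG : Continuous G)
    (J : EuclideanSpace ℝ (Fin n) → ℝ)
    (hJ : ∀ x, IsLeast ((fun w => G (x, w)) '' F) (J x))
    (S : ℝ → Set (EuclideanSpace ℝ (Fin n) × EuclideanSpace ℝ (Fin m)))
    (hS : ∀ ε, S ε = {p ∈ K | p.2 ∈ F ∧ G p - J p.1 ≤ ε})
    (val : ℝ → ℝ) (hval : ∀ ε, val ε = sInf (f '' S ε))
    (hS0 : (S 0).Nonempty) :
    AntitoneOn val (Ici 0) ∧
    LowerSemicontinuousOn val (Ici 0) ∧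
    ∀ ε ∈ Ici (0 : ℝ), ContinuousWithinAt val (Ici ε) ε :=
  stmt15_general K F hK hF f G hf hG J hJ S hS val hval hS0
end
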